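/- Let b > 0 and let V be a nonnegative integrable function on (b,b+1) with ∫_b^{b+1} V(r) dr ≤ 3. Then for every continuously differentiable function u : [b,b+1] → ℝ, one has ∫_b^{b+1} ( (d/dr)( u(r)·r^{−1/2} ) )² · r dr − ∫_b^{b+1} V(r)·u(r)² dr ≥ −(3.555)² · ∫_b^{b+1} u(r)² dr. -/

import Mathlib

/-!
With `q = u' - u / (2r)` one has `h_b[u] = ∫ q²`, and `∫ V u² ≤ 3 max u²`, so it suffices to show
`3 u(x)² ≤ ∫ q² + k² ∫ u²` for every `x ∈ [b, b + 1]`. Integrate `(u² ψ)'` over `[b, x]` and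
`(u² χ)'` over `[x, b + 1]`, where `ψ(b) = χ(b + 1) = 0`, `ψ(x) - χ(x) ≥ 1`, and both are
subsolutions of the Riccati equation `3 ψ² + ψ' + ψ / r = k² / 3`: by AM-GM this makes
`(u² ψ)' ≤ q² / 3 + k² u² / 3`. The weights are `ψ = (k/3) I₁/I₀ (k (r - b))`, built from partial
sums of the modified Bessel series, and `χ = -(k/3) T (k (b + 1 - r))` for a rational `T ≈ tanh`
with `T' + T² ≤ 1`. At `k = 3.555` the jump condition becomes a polynomial inequality on `[0, 1]`,
certified in Bernstein form.
-/

open MeasureTheory Set intervalIntegral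
open scoped Nat

theorem sq_derivWithin_mul_rpow_neg_half_mul {u : ℝ → ℝ} {s : Set ℝ} {r : ℝ} (hr : 0 < r)
    (hs : UniqueDiffWithinAt ℝ s r) (hu : DifferentiableWithinAt ℝ u s r) :
    derivWithin (fun t => u t * t ^ (-(1 / 2) : ℝ)) s r ^ 2 * r
      = (derivWithin u s r - u r / (2 * r)) ^ 2 := by
  have hpow : HasDerivWithinAt (fun t : ℝ => t ^ (-(1 / 2) : ℝ))
      (-(1 / 2) * r ^ (-(1 / 2) - 1 : ℝ)) s r :=
    (Real.hasDerivAt_rpow_const (Or.inl hr.ne')).hasDerivWithinAt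
  have hsub : r ^ (-(1 / 2) - 1 : ℝ) = r ^ (-(1 / 2) : ℝ) / r := Real.rpow_sub_one hr.ne' _
  have hsq : (r ^ (-(1 / 2) : ℝ)) ^ 2 * r = 1 := by
    rw [← Real.rpow_natCast, ← Real.rpow_mul hr.le]
    norm_num [Real.rpow_neg_one, hr.ne']
  have hd : HasDerivWithinAt (fun t => u t * t ^ (-(1 / 2) : ℝ))
      (derivWithin u s r * r ^ (-(1 / 2) : ℝ) + u r * (-(1 / 2) * r ^ (-(1 / 2) - 1 : ℝ))) s r :=
    hu.hasDerivWithinAt.mul hpow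
  rw [hd.derivWithin hs, hsub]
  calc _ = (derivWithin u s r - u r / (2 * r)) ^ 2 * ((r ^ (-(1 / 2) : ℝ)) ^ 2 * r) := by
        field_simp
        ring
    _ = _ := by rw [hsq, mul_one]

def IsRiccatiSubsolOn (α μ : ℝ) (ψ : ℝ → ℝ) (a c : ℝ) : Prop :=
  ContinuousOn ψ (Icc a c) ∧
    ∀ s ∈ Ioo a c, DifferentiableAt ℝ ψ s ∧ α * ψ s ^ 2 + deriv ψ s + ψ s / s ≤ μ

theorem two_mul_mul_mul_add_sq_mul_le {α μ s U U' P P' : ℝ} (hα : 0 < α) (hs : s ≠ 0)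
    (h : α * P ^ 2 + P' + P / s ≤ μ) :
    2 * U * U' * P + U ^ 2 * P' ≤ (U' - U / (2 * s)) ^ 2 / α + μ * U ^ 2 := by
  set Q := U' - U / (2 * s)
  have hsplit : 2 * U * U' * P + U ^ 2 * P' = 2 * U * Q * P + U ^ 2 * (P' + P / s) := by
    simp only [Q]
    field_simp
    ring
  have amgm : 2 * U * Q * P ≤ Q ^ 2 / α + α * U ^ 2 * P ^ 2 := by
    have h := div_nonneg (sq_nonneg (Q - α * U * P)) hα.le
    have e : (Q - α * U * P) ^ 2 / α = Q ^ 2 / α - 2 * U * Q * P + α * U ^ 2 * P ^ 2 := by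
      field_simp
      ring
    linarith
  have hμ := mul_le_mul_of_nonneg_left h (sq_nonneg U)
  nlinarith

theorem IsRiccatiSubsolOn.sq_mul_sub_le_integral {α μ a c : ℝ} {ψ u u' : ℝ → ℝ}
    (hψ : IsRiccatiSubsolOn α μ ψ a c) (hα : 0 < α) (ha : 0 ≤ a) (hac : a ≤ c)
    (hu : ContinuousOn u (Icc a c)) (hu' : ∀ s ∈ Ioo a c, HasDerivAt u (u' s) s)
    (hint : IntegrableOn (fun s => (u' s - u s / (2 * s)) ^ 2 / α + μ * u s ^ 2) (Icc a c)) :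
    u c ^ 2 * ψ c - u a ^ 2 * ψ a
      ≤ ∫ s in a..c, ((u' s - u s / (2 * s)) ^ 2 / α + μ * u s ^ 2) := by
  obtain ⟨hψc, hψd⟩ := hψ
  refine sub_le_integral_of_hasDeriv_right_of_le (g' := fun s => 2 * u s * u' s * ψ s
    + u s ^ 2 * deriv ψ s) hac ((hu.pow 2).mul hψc) (fun s hs => ?_) hint (fun s hs => ?_)
  · have h := ((hu' s hs).pow 2).mul (hψd s hs).1.hasDerivAt
    refine (h.congr_deriv ?_).hasDerivWithinAt
    simp only [Pi.pow_apply]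
    push_cast
    ring
  · exact two_mul_mul_mul_add_sq_mul_le hα (ha.trans_lt hs.1).ne' (hψd s hs).2

theorem sq_le_integral_of_isRiccatiSubsolOn {α μ a c x : ℝ} {ψ χ u u' : ℝ → ℝ}
    (hψ : IsRiccatiSubsolOn α μ ψ a x) (hχ : IsRiccatiSubsolOn α μ χ x c)
    (hψa : ψ a = 0) (hχc : χ c = 0) (hjump : 1 ≤ ψ x - χ x)
    (hα : 0 < α) (ha : 0 ≤ a) (hx : x ∈ Icc a c)
    (hu : ContinuousOn u (Icc a c)) (hu' : ∀ s ∈ Ioo a c, HasDerivAt u (u' s) s)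
    (hint : IntegrableOn (fun s => (u' s - u s / (2 * s)) ^ 2 / α + μ * u s ^ 2) (Icc a c)) :
    u x ^ 2 ≤ ∫ s in a..c, ((u' s - u s / (2 * s)) ^ 2 / α + μ * u s ^ 2) := by
  obtain ⟨hax, hxc⟩ := hx
  have hl : Icc a x ⊆ Icc a c := Icc_subset_Icc_right hxc
  have hr : Icc x c ⊆ Icc a c := Icc_subset_Icc_left hax
  have left := hψ.sq_mul_sub_le_integral hα ha hax (hu.mono hl)
    (fun s hs => hu' s ⟨hs.1, hs.2.trans_le hxc⟩) (hint.mono_set hl)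
  have right := hχ.sq_mul_sub_le_integral hα (ha.trans hax) hxc (hu.mono hr)
    (fun s hs => hu' s ⟨hax.trans_lt hs.1, hs.2⟩) (hint.mono_set hr)
  rw [← integral_add_adjacent_intervals
    ((intervalIntegrable_iff_integrableOn_Icc_of_le hax).2 (hint.mono_set hl))
    ((intervalIntegrable_iff_integrableOn_Icc_of_le hxc).2 (hint.mono_set hr))]
  have hx2 : u x ^ 2 ≤ u x ^ 2 * (ψ x - χ x) := le_mul_of_one_le_right (sq_nonneg _) hjump
  rw [hψa, mul_zero, sub_zero] at left
  rw [hχc, mul_zero, zero_sub] at right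
  linarith

theorem integral_mul_le_mul_integral_of_le {V f : ℝ → ℝ} {a c M : ℝ} (hac : a ≤ c)
    (hV : ∀ r ∈ Ioo a c, 0 ≤ V r) (hVint : IntegrableOn V (Ioo a c))
    (hf0 : ∀ r ∈ Ioo a c, 0 ≤ f r) (hfM : ∀ r ∈ Ioo a c, f r ≤ M) :
    ∫ r in a..c, V r * f r ≤ M * ∫ r in a..c, V r := by
  simp only [integral_of_le hac, integral_Ioc_eq_integral_Ioo, ← MeasureTheory.integral_const_mul]
  refine integral_mono_of_nonneg ?_ (hVint.const_mul M) ?_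
  · filter_upwards [ae_restrict_mem measurableSet_Ioo] with r hr
      using mul_nonneg (hV r hr) (hf0 r hr)
  · filter_upwards [ae_restrict_mem measurableSet_Ioo] with r hr
    simpa only [mul_comm M] using mul_le_mul_of_nonneg_left (hfM r hr) (hV r hr)

noncomputable def besselI0Partial (N : ℕ) (z : ℝ) : ℝ :=
  ∑ n ∈ Finset.range N, (z / 2) ^ (2 * n) / (n ! : ℝ) ^ 2

noncomputable def besselI1Partial (N : ℕ) (z : ℝ) : ℝ :=
  ∑ n ∈ Finset.range N, (z / 2) ^ (2 * n + 1) / ((n ! : ℝ) * (n + 1)!)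

theorem hasDerivAt_div_two_pow_succ (m : ℕ) (z : ℝ) :
    HasDerivAt (fun z : ℝ => (z / 2) ^ (m + 1)) ((m + 1) / 2 * (z / 2) ^ m) z := by
  have h := ((hasDerivAt_id' z).div_const 2).fun_pow (m + 1)
  refine h.congr_deriv ?_
  simp only [Nat.add_sub_cancel]
  push_cast
  ring

theorem hasDerivAt_besselI0Partial_succ (N : ℕ) (z : ℝ) :
    HasDerivAt (besselI0Partial (N + 1)) (besselI1Partial N z) z := by
  induction N with
  | zero =>
    have e : besselI0Partial 1 = fun _ => 1 := by funext z; simp [besselI0Partial]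
    simpa [e, besselI1Partial] using hasDerivAt_const z (1 : ℝ)
  | succ N ih =>
    have hterm := (hasDerivAt_div_two_pow_succ (2 * N + 1) z).div_const (((N + 1)! : ℝ) ^ 2)
    have e : besselI0Partial (N + 1 + 1)
        = fun z => besselI0Partial (N + 1) z + (z / 2) ^ (2 * N + 1 + 1) / ((N + 1)! : ℝ) ^ 2 := by
      funext z
      exact Finset.sum_range_succ _ (N + 1)
    rw [e, besselI1Partial, Finset.sum_range_succ]
    refine (ih.add hterm).congr_deriv ?_
    rw [besselI1Partial, Nat.factorial_succ]
    push_cast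
    field_simp
    ring

theorem hasDerivAt_mul_besselI1Partial (N : ℕ) (z : ℝ) :
    HasDerivAt (fun z => z * besselI1Partial N z) (z * besselI0Partial N z) z := by
  simp only [besselI1Partial, besselI0Partial, Finset.mul_sum]
  refine HasDerivAt.fun_sum fun n _ => ?_
  have h := ((hasDerivAt_div_two_pow_succ (2 * n + 1) z).const_mul 2).div_const
    ((n ! : ℝ) * (n + 1)!)
  have e : (fun z : ℝ => z * ((z / 2) ^ (2 * n + 1) / ((n ! : ℝ) * (n + 1)!)))
      = fun z => 2 * (z / 2) ^ (2 * n + 1 + 1) / ((n ! : ℝ) * (n + 1)!) := by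
    funext z
    ring
  rw [e]
  refine h.congr_deriv ?_
  rw [Nat.factorial_succ]
  push_cast
  field_simp
  ring

theorem differentiable_besselI1Partial (N : ℕ) : Differentiable ℝ (besselI1Partial N) := by
  unfold besselI1Partial
  fun_prop

theorem deriv_besselI1Partial {N : ℕ} {z : ℝ} (hz : z ≠ 0) :
    deriv (besselI1Partial N) z = besselI0Partial N z - besselI1Partial N z / z := by
  have h := ((hasDerivAt_id z).mul (differentiable_besselI1Partial N z).hasDerivAt).unique
    (hasDerivAt_mul_besselI1Partial N z)
  simp only [id] at h
  field_simp
  linarith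

theorem besselI0Partial_term_nonneg (n : ℕ) (z : ℝ) : 0 ≤ (z / 2) ^ (2 * n) / (n ! : ℝ) ^ 2 := by
  rw [pow_mul]
  positivity

theorem besselI0Partial_le_succ (N : ℕ) (z : ℝ) :
    besselI0Partial N z ≤ besselI0Partial (N + 1) z := by
  rw [besselI0Partial, besselI0Partial, Finset.sum_range_succ]
  exact le_add_of_nonneg_right (besselI0Partial_term_nonneg N z)

theorem one_le_besselI0Partial_succ (N : ℕ) (z : ℝ) : 1 ≤ besselI0Partial (N + 1) z := by
  rw [besselI0Partial, Finset.sum_range_succ']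
  simpa using Finset.sum_nonneg fun n _ => besselI0Partial_term_nonneg (n + 1) z

theorem besselI0Partial_succ_pos (N : ℕ) (z : ℝ) : 0 < besselI0Partial (N + 1) z :=
  zero_lt_one.trans_le (one_le_besselI0Partial_succ N z)

theorem besselI1Partial_nonneg (N : ℕ) {z : ℝ} (hz : 0 ≤ z) : 0 ≤ besselI1Partial N z :=
  Finset.sum_nonneg fun n _ => by positivity

noncomputable def besselRatio (N : ℕ) (z : ℝ) : ℝ := besselI1Partial N z / besselI0Partial (N + 1) z

theorem besselRatio_nonneg (N : ℕ) {z : ℝ} (hz : 0 ≤ z) : 0 ≤ besselRatio N z :=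
  div_nonneg (besselI1Partial_nonneg N hz) (besselI0Partial_succ_pos N z).le

theorem besselRatio_zero (N : ℕ) : besselRatio N 0 = 0 := by
  simp [besselRatio, besselI1Partial]

theorem hasDerivAt_besselRatio {N : ℕ} {z : ℝ} (hz : z ≠ 0) :
    HasDerivAt (besselRatio N)
      (besselI0Partial N z / besselI0Partial (N + 1) z - besselRatio N z ^ 2
        - besselRatio N z / z) z := by
  have h := (differentiable_besselI1Partial N z).hasDerivAt.div
    (hasDerivAt_besselI0Partial_succ N z) (besselI0Partial_succ_pos N z).ne'
  refine h.congr_deriv ?_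
  rw [deriv_besselI1Partial hz, besselRatio]
  field_simp
  ring

@[fun_prop]
theorem continuous_besselRatio (N : ℕ) : Continuous (besselRatio N) := by
  refine (differentiable_besselI1Partial N).continuous.div
    (continuous_iff_continuousAt.2 fun z => (hasDerivAt_besselI0Partial_succ N z).continuousAt)
    fun z => (besselI0Partial_succ_pos N z).ne'

theorem isRiccatiSubsolOn_besselRatio (N : ℕ) {α k a : ℝ} (c : ℝ) (hα : 0 < α) (hk : 0 < k)
    (ha : 0 ≤ a) :
    IsRiccatiSubsolOn α (k ^ 2 / α) (fun s => k / α * besselRatio N (k * (s - a))) a c := by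
  refine ⟨by fun_prop, fun s ⟨has, _⟩ => ?_⟩
  set z := k * (s - a)
  have hz : 0 < z := mul_pos hk (sub_pos.2 has)
  have hs : 0 < s := ha.trans_lt has
  have hd := ((hasDerivAt_besselRatio (N := N) hz.ne').comp s
    (((hasDerivAt_id' s).sub_const a).const_mul k)).const_mul (k / α)
  simp only [Function.comp_def] at hd
  refine ⟨hd.differentiableAt, ?_⟩
  beta_reduce
  rw [hd.deriv]
  set f := besselRatio N z
  set ρ := besselI0Partial N z / besselI0Partial (N + 1) z
  have hρ : ρ ≤ 1 :=
    div_le_one_of_le₀ (besselI0Partial_le_succ N z) (besselI0Partial_succ_pos N z).le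
  have hf : 0 ≤ f := besselRatio_nonneg N hz.le
  have hzs : f / s ≤ k * f / z := by
    rw [div_le_div_iff₀ hs hz]
    nlinarith [mul_nonneg (mul_nonneg hk.le ha) hf]
  have e : α * (k / α * f) ^ 2 + k / α * ((ρ - f ^ 2 - f / z) * (k * 1)) + k / α * f / s
      = k ^ 2 / α * ρ + k / α * (f / s - k * f / z) := by
    field_simp
    ring
  have h1 : k / α * (f / s - k * f / z) ≤ 0 :=
    mul_nonpos_of_nonneg_of_nonpos (by positivity) (by linarith)
  have h2 : k ^ 2 / α * ρ ≤ k ^ 2 / α := mul_le_of_le_one_right (by positivity) hρ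
  linarith

noncomputable def tanhApprox (z : ℝ) : ℝ := z * (15 + z ^ 2) / (15 + 6 * z ^ 2 + z ^ 4 / 10)

theorem tanhApprox_nonneg {z : ℝ} (hz : 0 ≤ z) : 0 ≤ tanhApprox z := by
  unfold tanhApprox
  positivity

theorem tanhApprox_zero : tanhApprox 0 = 0 := by simp [tanhApprox]

theorem hasDerivAt_tanhApprox (z : ℝ) :
    HasDerivAt tanhApprox (((15 + 3 * z ^ 2) * (15 + 6 * z ^ 2 + z ^ 4 / 10)
      - z * (15 + z ^ 2) * (12 * z + 2 / 5 * z ^ 3)) / (15 + 6 * z ^ 2 + z ^ 4 / 10) ^ 2) z := by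
  have hnum : HasDerivAt (fun z : ℝ => z * (15 + z ^ 2)) (15 + 3 * z ^ 2) z := by
    have h := (hasDerivAt_id' z).mul ((hasDerivAt_const z (15 : ℝ)).add (hasDerivAt_pow 2 z))
    refine h.congr_deriv ?_
    simp only [Pi.add_apply]
    push_cast
    ring
  have hden : HasDerivAt (fun z : ℝ => 15 + 6 * z ^ 2 + z ^ 4 / 10) (12 * z + 2 / 5 * z ^ 3) z := by
    have h := ((hasDerivAt_const z (15 : ℝ)).add ((hasDerivAt_pow 2 z).const_mul 6)).add
      ((hasDerivAt_pow 4 z).div_const 10)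
    refine h.congr_deriv ?_
    push_cast
    ring
  exact hnum.div hden (by positivity)

theorem differentiable_tanhApprox : Differentiable ℝ tanhApprox :=
  fun z => (hasDerivAt_tanhApprox z).differentiableAt

@[fun_prop]
theorem continuous_tanhApprox : Continuous tanhApprox := differentiable_tanhApprox.continuous

theorem deriv_tanhApprox_add_sq_le_one (z : ℝ) : deriv tanhApprox z + tanhApprox z ^ 2 ≤ 1 := by
  have hD : 0 < 15 + 6 * z ^ 2 + z ^ 4 / 10 := by positivity
  rw [(hasDerivAt_tanhApprox z).deriv, tanhApprox, div_pow, ← add_div, div_le_one (by positivity)]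
  nlinarith [pow_nonneg (sq_nonneg z) 2, sq_nonneg z, sq_nonneg (z ^ 2), sq_nonneg (z ^ 4)]

theorem isRiccatiSubsolOn_tanhApprox {α k a c : ℝ} (hα : 0 < α) (hk : 0 ≤ k) (ha : 0 ≤ a) :
    IsRiccatiSubsolOn α (k ^ 2 / α) (fun s => -(k / α) * tanhApprox (k * (c - s))) a c := by
  refine ⟨by fun_prop, fun s ⟨has, hsc⟩ => ?_⟩
  set w := k * (c - s)
  have hs : 0 < s := ha.trans_lt has
  have hy : 0 ≤ tanhApprox w := tanhApprox_nonneg (mul_nonneg hk (sub_pos.2 hsc).le)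
  have hd := ((differentiable_tanhApprox w).hasDerivAt.comp s
    ((hasDerivAt_id' s).const_sub c |>.const_mul k)).const_mul (-(k / α))
  simp only [Function.comp_def] at hd
  refine ⟨hd.differentiableAt, ?_⟩
  beta_reduce
  rw [hd.deriv]
  have e : α * (-(k / α) * tanhApprox w) ^ 2 + -(k / α) * (deriv tanhApprox w * (k * -1))
      = k ^ 2 / α * (deriv tanhApprox w + tanhApprox w ^ 2) := by
    field_simp
    ring
  have h1 : k ^ 2 / α * (deriv tanhApprox w + tanhApprox w ^ 2) ≤ k ^ 2 / α :=
    mul_le_of_le_one_right (by positivity) (deriv_tanhApprox_add_sq_le_one w)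
  have h2 : -(k / α) * tanhApprox w / s ≤ 0 :=
    div_nonpos_of_nonpos_of_nonneg (by nlinarith [div_nonneg hk hα.le]) hs.le
  linarith

-- Certificate for the jump inequality: a polynomial in Bernstein form with positive coefficients.
noncomputable def jumpBernstein (t : ℝ) : ℝ :=
  (15349569562638543881743140741717880282505550012189633534486723/11033819087057715200000000000000000000000000000000000000000 : ℝ) * (1 - t) ^ 0 * t ^ 21
  + (275357218417647807943618361394012421042967469742956646758756507/11033819087057715200000000000000000000000000000000000000000 : ℝ) * (1 - t) ^ 1 * t ^ 20
  + (9669411014564181048201876662904792210132974877292184354506779461889/45035996273704960000000000000000000000000000000000000000000000 : ℝ) * (1 - t) ^ 2 * t ^ 19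
  + (148485694053339872665194872150353882554090806826452235369247553786823/126100789566373888000000000000000000000000000000000000000000000 : ℝ) * (1 - t) ^ 3 * t ^ 18
  + (50927611191248583688887512258051377678486704559625245143531964067933049/11033819087057715200000000000000000000000000000000000000000000000 : ℝ) * (1 - t) ^ 4 * t ^ 17
  + (54150136442854521984870886800752345698842350745647482001923027533/3940649673949184000000000000000000000000000000000000000000 : ℝ) * (1 - t) ^ 5 * t ^ 16
  + (277865768830417474677249626664912669951478769893842640956157081521/8620171161763840000000000000000000000000000000000000000000 : ℝ) * (1 - t) ^ 6 * t ^ 15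
  + (210332051338323269063892814139123467720987522620905140442331087/3448068464705536000000000000000000000000000000000000000 : ℝ) * (1 - t) ^ 7 * t ^ 14
  + (23292624802986152033377796469260541062320478593029700851620631/246290604621824000000000000000000000000000000000000000 : ℝ) * (1 - t) ^ 8 * t ^ 13
  + (478063954778814101608725450926949785376940327099671621870939/3940649673949184000000000000000000000000000000000000 : ℝ) * (1 - t) ^ 9 * t ^ 12
  + (127558440549838171994437142550137016928264521019021570708947/985162418487296000000000000000000000000000000000000 : ℝ) * (1 - t) ^ 10 * t ^ 11
  + (454009636489352863496451831222832613480449512160592901317979/3940649673949184000000000000000000000000000000000000 : ℝ) * (1 - t) ^ 11 * t ^ 10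
  + (33635682273955586523890314700388592146644695906845255301383/394064967394918400000000000000000000000000000000000 : ℝ) * (1 - t) ^ 12 * t ^ 9
  + (289079935114875684966127818116282188613169135227678235312447/5516909543528857600000000000000000000000000000000000 : ℝ) * (1 - t) ^ 13 * t ^ 8
  + (91097711941527064208931773587228307177519151930292745104149/3448068464705536000000000000000000000000000000000000 : ℝ) * (1 - t) ^ 14 * t ^ 7
  + (85033292031488988485634037076449128571643014765492745104149/7881299347898368000000000000000000000000000000000000 : ℝ) * (1 - t) ^ 15 * t ^ 6
  + (13767896661255779414395370749607131708468247782145778547791/3940649673949184000000000000000000000000000000000000 : ℝ) * (1 - t) ^ 16 * t ^ 5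
  + (1369202509074953088085838400013604585480535975793975394199/1576259869579673600000000000000000000000000000000000 : ℝ) * (1 - t) ^ 17 * t ^ 4
  + (62075697990286644001706154526053283301501893462840810221/394064967394918400000000000000000000000000000000000 : ℝ) * (1 - t) ^ 18 * t ^ 3
  + (150304619063136376758888623671795917232505680388522430663/7881299347898368000000000000000000000000000000000000 : ℝ) * (1 - t) ^ 19 * t ^ 2
  + (35527543144543486053443346421926639077501893462840810221/27584547717644288000000000000000000000000000000000000 : ℝ) * (1 - t) ^ 20 * t ^ 1
  + (1592823357559581304704727034020094461591081223894619111/55169095435288576000000000000000000000000000000000000 : ℝ) * (1 - t) ^ 21 * t ^ 0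

theorem jumpBernstein_nonneg {t : ℝ} (h0 : 0 ≤ t) (h1 : t ≤ 1) : 0 ≤ jumpBernstein t := by
  have h1t : 0 ≤ 1 - t := sub_nonneg.2 h1
  unfold jumpBernstein
  repeat' apply add_nonneg
  all_goals exact mul_nonneg (mul_nonneg (by norm_num) (pow_nonneg h1t _)) (pow_nonneg h0 _)

theorem one_le_besselRatio_add_tanhApprox {t : ℝ} (h0 : 0 ≤ t) (h1 : t ≤ 1) :
    1 ≤ 3.555 / 3 * besselRatio 9 (3.555 * t) + 3.555 / 3 * tanhApprox (3.555 * (1 - t)) := by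
  have hI0 := besselI0Partial_succ_pos 9 (3.555 * t)
  set w := 3.555 * (1 - t) with hw
  have hD : 0 < 15 + 6 * w ^ 2 + w ^ 4 / 10 := by positivity
  have hpoly : 3.555 * besselI1Partial 9 (3.555 * t) * (15 + 6 * w ^ 2 + w ^ 4 / 10)
        + 3.555 * (w * (15 + w ^ 2)) * besselI0Partial 10 (3.555 * t)
        - 3 * besselI0Partial 10 (3.555 * t) * (15 + 6 * w ^ 2 + w ^ 4 / 10)
      = 995155695203084625774597979905538408918776105380889
          / 55169095435288576000000000000000000000000000000000000 + (1 - t) * jumpBernstein t := by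
    simp only [hw, besselI0Partial, besselI1Partial, jumpBernstein, Finset.sum_range_succ,
      Finset.sum_range_zero, Nat.factorial]
    push_cast
    ring
  have hpos : 0 ≤ (1 - t) * jumpBernstein t :=
    mul_nonneg (sub_nonneg.2 h1) (jumpBernstein_nonneg h0 h1)
  rw [besselRatio, tanhApprox, mul_div_assoc', mul_div_assoc',
    div_add_div _ _ (by positivity) hD.ne', one_le_div (by positivity)]
  linarith

theorem three_mul_sq_le_integral_of_contDiffOn {b : ℝ} (hb : 0 < b) {u : ℝ → ℝ}
    (hu : ContDiffOn ℝ 1 u (Icc b (b + 1))) {x : ℝ} (hx : x ∈ Icc b (b + 1)) :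
    3 * u x ^ 2 ≤ (∫ s in b..b + 1, (derivWithin u (Icc b (b + 1)) s - u s / (2 * s)) ^ 2)
      + 3.555 ^ 2 * ∫ s in b..b + 1, u s ^ 2 := by
  have hbb : b < b + 1 := by linarith
  set u' := derivWithin u (Icc b (b + 1))
  have hu' : ∀ s ∈ Ioo b (b + 1), HasDerivAt u (u' s) s := fun s hs =>
    ((hu.differentiableOn one_ne_zero) s (Ioo_subset_Icc_self hs)).hasDerivWithinAt.hasDerivAt
      (Icc_mem_nhds hs.1 hs.2)
  have hq : ContinuousOn (fun s => (u' s - u s / (2 * s)) ^ 2) (Icc b (b + 1)) :=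
    ((hu.continuousOn_derivWithin (uniqueDiffOn_Icc hbb) le_rfl).sub
      (hu.continuousOn.div (by fun_prop) fun s hs => by linarith [hs.1])).pow 2
  have hu2 : ContinuousOn (fun s => u s ^ 2) (Icc b (b + 1)) := hu.continuousOn.pow 2
  have hjump := one_le_besselRatio_add_tanhApprox (t := x - b) (by linarith [hx.1])
    (by linarith [hx.2])
  rw [show 1 - (x - b) = b + 1 - x by ring] at hjump
  have hbound := sq_le_integral_of_isRiccatiSubsolOn
    (isRiccatiSubsolOn_besselRatio 9 x (α := 3) (k := 3.555) (by norm_num) (by norm_num) hb.le)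
    (isRiccatiSubsolOn_tanhApprox (c := b + 1) (by norm_num) (by norm_num) (hb.le.trans hx.1))
    (by simp [besselRatio_zero]) (by simp [tanhApprox_zero]) (by linarith)
    (by norm_num) hb.le hx hu.continuousOn hu'
    ((hq.div_const 3).add (hu2.const_mul _)).integrableOn_Icc
  rw [integral_add ((hq.div_const 3).intervalIntegrable_of_Icc hbb.le)
    ((hu2.const_mul _).intervalIntegrable_of_Icc hbb.le), intervalIntegral.integral_div,
    intervalIntegral.integral_const_mul] at hbound
  linarith

/-- Lower bound for the lowest eigenvalue of `H_b − V`: if `b > 0` and `V ≥ 0` is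
integrable on `(b, b+1)` with `∫_b^{b+1} V dr ≤ 3`, then for every `C¹` function `u` on
`[b, b+1]`, `h_b[u] − ∫_b^{b+1} V u² dr ≥ −(3.555)² ∫_b^{b+1} u² dr`. -/
theorem lowest_eigenvalue_bound (b : ℝ) (hb : 0 < b) (V : ℝ → ℝ)
    (hV : ∀ r ∈ Set.Ioo b (b + 1), 0 ≤ V r)
    (hVint : MeasureTheory.IntegrableOn V (Set.Ioo b (b + 1)))
    (hVsmall : (∫ r in b..(b + 1), V r) ≤ 3)
    (u : ℝ → ℝ) (hu : ContDiffOn ℝ 1 u (Set.Icc b (b + 1))) :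
    (∫ r in b..(b + 1),
        (derivWithin (fun s : ℝ => u s * s ^ (-(1 / 2) : ℝ)) (Set.Icc b (b + 1)) r) ^ 2
          * r)
      - (∫ r in b..(b + 1), V r * u r ^ 2)
      ≥ -(3.555 : ℝ) ^ 2 * ∫ r in b..(b + 1), u r ^ 2 := by
  have hbb : b < b + 1 := by linarith
  obtain ⟨x₀, hx₀, hmax⟩ := isCompact_Icc.exists_isMaxOn (nonempty_Icc.2 hbb.le)
    (hu.continuousOn.pow 2)
  have hform : (∫ r in b..(b + 1),
        (derivWithin (fun s : ℝ => u s * s ^ (-(1 / 2) : ℝ)) (Set.Icc b (b + 1)) r) ^ 2 * r)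
      = ∫ r in b..(b + 1), (derivWithin u (Icc b (b + 1)) r - u r / (2 * r)) ^ 2 :=
    integral_congr fun r hr => by
      rw [uIcc_of_le hbb.le] at hr
      exact sq_derivWithin_mul_rpow_neg_half_mul (hb.trans_le hr.1) (uniqueDiffOn_Icc hbb r hr)
        ((hu.differentiableOn one_ne_zero) r hr)
  have hpot := integral_mul_le_mul_integral_of_le (M := u x₀ ^ 2) hbb.le hV hVint
    (fun r _ => sq_nonneg (u r)) fun r hr => hmax (Ioo_subset_Icc_self hr)
  have hV3 := mul_le_mul_of_nonneg_left hVsmall (sq_nonneg (u x₀))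
  have hsup := three_mul_sq_le_integral_of_contDiffOn hb hu hx₀
  rw [hform]
  linarith
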